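/- arXiv:1702.05951 — 5 statements merged into one kernel-verified Lean document; each statement's English description precedes it below -/
import Mathlib

section
/- Let G be a finite connected weighted graph with terminals T, let S ⊂ T be a nonempty proper subset, and let E_S be the minimum cutset separating S from T∖S. For every connected component C of G∖E_S, the boundary δ(C) (the set of edges of G with exactly one endpoint in C) is itself a minimum-weight cutset separating T∩C from T∖C in G. -/
def Separates {V : Type} (G : SimpleGraph V) (F : Set (Sym2 V)) (A B : Set V) : Prop :=
  ∀ a ∈ A, ∀ b ∈ B, ¬ (G.deleteEdges F).Reachable a b

noncomputable def cutWeight {V : Type} (c : Sym2 V → ℝ) (F : Finset (Sym2 V)) : ℝ :=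
  ∑ e ∈ F, c e

def IsMinCutset {V : Type} (G : SimpleGraph V) (c : Sym2 V → ℝ) (T S : Set V)
    (F : Finset (Sym2 V)) : Prop :=
  (F : Set (Sym2 V)) ⊆ G.edgeSet ∧ Separates G (F : Set (Sym2 V)) S (T \ S) ∧
  ∀ F' : Finset (Sym2 V), (F' : Set (Sym2 V)) ⊆ G.edgeSet →
    Separates G (F' : Set (Sym2 V)) S (T \ S) → cutWeight c F ≤ cutWeight c F'

/-- The boundary `δ(C)`: edges of `G` with exactly one endpoint in `C`, as a `Finset`. -/
noncomputable def boundaryF {V : Type} [Fintype V] (G : SimpleGraph V) (C : Set V) :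
    Finset (Sym2 V) :=
  (Set.toFinite {e | e ∈ G.edgeSet ∧ ∃ u v, e = s(u, v) ∧ u ∈ C ∧ v ∉ C}).toFinset

lemma mem_boundaryF {V : Type} [Fintype V] {G : SimpleGraph V} {C : Set V} {e : Sym2 V} :
    e ∈ boundaryF G C ↔ e ∈ G.edgeSet ∧ ∃ u v, e = s(u, v) ∧ u ∈ C ∧ v ∉ C := by
  simp [boundaryF]

lemma boundaryF_subset_edgeSet {V : Type} [Fintype V] {G : SimpleGraph V} {C : Set V} :
    (boundaryF G C : Set (Sym2 V)) ⊆ G.edgeSet := by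
  intro e he
  rw [Finset.mem_coe, mem_boundaryF] at he
  exact he.1

lemma boundaryF_compl {V : Type} [Fintype V] (G : SimpleGraph V) (C : Set V) :
    boundaryF G Cᶜ = boundaryF G C := by
  ext e
  simp only [mem_boundaryF]
  constructor
  · rintro ⟨he, u, v, rfl, hu, hv⟩
    exact ⟨he, v, u, Sym2.eq_swap, by simpa using hv, by simpa using hu⟩
  · rintro ⟨he, u, v, rfl, hu, hv⟩
    exact ⟨he, v, u, Sym2.eq_swap, by simpa using hv, by simpa using hu⟩

/-- Reachability in `G` minus the boundary of `U` preserves membership in `U`. -/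
lemma reach_region {V : Type} [Fintype V] {G : SimpleGraph V} {U : Set V} {a b : V}
    (h : (G.deleteEdges (boundaryF G U : Set (Sym2 V))).Reachable a b) :
    a ∈ U ↔ b ∈ U := by
  obtain ⟨p⟩ := h
  induction p with
  | nil => rfl
  | @cons x y z hxy p ih =>
    rw [SimpleGraph.deleteEdges_adj] at hxy
    obtain ⟨hadj, hne⟩ := hxy
    have hxyU : x ∈ U ↔ y ∈ U := by
      constructor
      · intro hx
        by_contra hy
        exact hne (by
          rw [Finset.mem_coe, mem_boundaryF]
          exact ⟨(SimpleGraph.mem_edgeSet G).2 hadj, x, y, rfl, hx, hy⟩)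
      · intro hy
        by_contra hx
        exact hne (by
          rw [Finset.mem_coe, mem_boundaryF]
          exact ⟨(SimpleGraph.mem_edgeSet G).2 hadj, y, x, Sym2.eq_swap, hy, hx⟩)
    exact hxyU.trans ih

lemma separates_of_region {V : Type} [Fintype V] {G : SimpleGraph V} {U P Q : Set V}
    (hP : P ⊆ U) (hQ : ∀ q ∈ Q, q ∉ U) :
    Separates G (boundaryF G U : Set (Sym2 V)) P Q := by
  intro a ha b hb hr
  exact hQ b hb ((reach_region hr).1 (hP ha))

lemma separates_of_region' {V : Type} [Fintype V] {G : SimpleGraph V} {U P Q : Set V}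
    (hP : ∀ p ∈ P, p ∉ U) (hQ : Q ⊆ U) :
    Separates G (boundaryF G U : Set (Sym2 V)) P Q := by
  intro a ha b hb hr
  exact hP a ha ((reach_region hr).2 (hQ hb))

/-- Deleting one edge: reachability either survives or passes through the deleted edge. -/
lemma reach_delete_single {V : Type} {H : SimpleGraph V} {x u a b : V}
    (h : H.Reachable a b) :
    (H.deleteEdges {s(x, u)}).Reachable a b ∨
    ((H.deleteEdges {s(x, u)}).Reachable a x ∧ (H.deleteEdges {s(x, u)}).Reachable u b) ∨
    ((H.deleteEdges {s(x, u)}).Reachable a u ∧ (H.deleteEdges {s(x, u)}).Reachable x b) := by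
  set H' := H.deleteEdges {s(x, u)} with hH'
  obtain ⟨p⟩ := h
  induction p with
  | nil => exact Or.inl (SimpleGraph.Reachable.refl _)
  | @cons p q r hpq w ih =>
    by_cases he : s(p, q) = s(x, u)
    · rw [Sym2.eq_iff] at he
      rcases he with ⟨rfl, rfl⟩ | ⟨rfl, rfl⟩
      · rcases ih with h1 | ⟨h1, h2⟩ | ⟨h1, h2⟩
        · exact Or.inr (Or.inl ⟨SimpleGraph.Reachable.refl _, h1⟩)
        · exact Or.inl (h1.symm.trans h2)
        · exact Or.inl h2
      · rcases ih with h1 | ⟨h1, h2⟩ | ⟨h1, h2⟩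
        · exact Or.inr (Or.inr ⟨SimpleGraph.Reachable.refl _, h1⟩)
        · exact Or.inl h2
        · exact Or.inl (h1.symm.trans h2)
    · have hadj : H'.Adj p q := by
        rw [hH', SimpleGraph.deleteEdges_adj]
        exact ⟨hpq, by simpa using he⟩
      rcases ih with h1 | ⟨h1, h2⟩ | ⟨h1, h2⟩
      · exact Or.inl ((hadj.reachable).trans h1)
      · exact Or.inr (Or.inl ⟨(hadj.reachable).trans h1, h2⟩)
      · exact Or.inr (Or.inr ⟨(hadj.reachable).trans h1, h2⟩)

lemma cutWeight_mono {V : Type} {c : Sym2 V → ℝ} {F₁ F₂ : Finset (Sym2 V)}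
    (h : F₁ ⊆ F₂) (hn : ∀ e ∈ F₂, 0 ≤ c e) : cutWeight c F₁ ≤ cutWeight c F₂ :=
  Finset.sum_le_sum_of_subset_of_nonneg h (fun e he _ => hn e he)

/-- The key submodularity-style weight bound. -/
lemma weight_bound {V : Type} [Fintype V]
    (G : SimpleGraph V) (c : Sym2 V → ℝ) (hpos : ∀ e ∈ G.edgeSet, 0 < c e)
    (T S : Set V) (F : Finset (Sym2 V)) (hF : IsMinCutset G c T S F)
    (C A Z : Set V)
    (hFB : F = boundaryF G Z)
    (hCZ : C ⊆ Z)
    (hCcl : ∀ ⦃u v : V⦄, u ∈ C → G.Adj u v → s(u, v) ∉ F → v ∈ C)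
    (hAedge : (boundaryF G A : Set (Sym2 V)) ⊆ G.edgeSet)
    (hsep : Separates G (boundaryF G ((Z \ C) ∪ A) : Set (Sym2 V)) S (T \ S)) :
    cutWeight c (boundaryF G C) ≤ cutWeight c (boundaryF G A) := by
  classical
  set Y : Set V := (Z \ C) ∪ A with hY
  -- the boundary of C is contained in F
  have hCF : ∀ ⦃e : Sym2 V⦄, e ∈ boundaryF G C → e ∈ F := by
    intro e he
    rw [mem_boundaryF] at he
    obtain ⟨hedge, u, v, rfl, hu, hv⟩ := he
    by_contra hnF
    exact hv (hCcl hu ((SimpleGraph.mem_edgeSet G).1 hedge) hnF)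
  -- edges not in F and not in δA don't cross C
  have hsame : ∀ ⦃u v : V⦄, G.Adj u v → s(u, v) ∉ F → s(u, v) ∉ boundaryF G A →
      ((u ∈ Z ↔ v ∈ Z) ∧ (u ∈ A ↔ v ∈ A) ∧ (u ∈ C ↔ v ∈ C)) := by
    intro u v hadj hnF hnA
    have hedge : s(u, v) ∈ G.edgeSet := (SimpleGraph.mem_edgeSet G).2 hadj
    refine ⟨?_, ?_, ?_⟩
    · constructor
      · intro hu; by_contra hv
        exact hnF (hFB ▸ mem_boundaryF.2 ⟨hedge, u, v, rfl, hu, hv⟩)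
      · intro hv; by_contra hu
        exact hnF (hFB ▸ mem_boundaryF.2 ⟨hedge, v, u, Sym2.eq_swap, hv, hu⟩)
    · constructor
      · intro hu; by_contra hv
        exact hnA (mem_boundaryF.2 ⟨hedge, u, v, rfl, hu, hv⟩)
      · intro hv; by_contra hu
        exact hnA (mem_boundaryF.2 ⟨hedge, v, u, Sym2.eq_swap, hv, hu⟩)
    · constructor
      · intro hu; by_contra hv
        exact hv (hCcl hu hadj hnF)
      · intro hv; by_contra hu
        exact hu (hCcl hv hadj.symm (by rwa [Sym2.eq_swap]))
  -- inclusion 1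
  have hsub1 : boundaryF G Y ∪ boundaryF G C ⊆ F ∪ boundaryF G A := by
    intro e he
    rw [Finset.mem_union] at he
    rw [Finset.mem_union]
    by_contra hcon
    push_neg at hcon
    obtain ⟨hnF, hnA⟩ := hcon
    rcases he with he | he
    · rw [mem_boundaryF] at he
      obtain ⟨hedge, u, v, rfl, hu, hv⟩ := he
      obtain ⟨hZ, hA, hC⟩ := hsame ((SimpleGraph.mem_edgeSet G).1 hedge) hnF hnA
      rcases hu with ⟨huZ, huC⟩ | huA
      · exact hv (Or.inl ⟨hZ.1 huZ, fun h => huC (hC.2 h)⟩)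
      · exact hv (Or.inr (hA.1 huA))
    · exact hnF (hCF he)
  -- inclusion 2
  have hsub2 : boundaryF G Y ∩ boundaryF G C ⊆ F ∩ boundaryF G A := by
    intro e he
    rw [Finset.mem_inter] at he
    obtain ⟨heY, heC⟩ := he
    rw [Finset.mem_inter]
    refine ⟨hCF heC, ?_⟩
    by_contra hnA
    rw [mem_boundaryF] at heC
    obtain ⟨hedge, u, v, rfl, hu, hv⟩ := heC
    have hadj := (SimpleGraph.mem_edgeSet G).1 hedge
    -- e ∈ F, so endpoints differ on Z
    have heF : s(u, v) ∈ F := hCF (mem_boundaryF.2 ⟨hedge, u, v, rfl, hu, hv⟩)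
    have hvZ : v ∉ Z := by
      intro hvZ
      rw [hFB, mem_boundaryF] at heF
      obtain ⟨_, p, q, hpq, hp, hq⟩ := heF
      rw [Sym2.eq_iff] at hpq
      rcases hpq with ⟨rfl, rfl⟩ | ⟨rfl, rfl⟩
      · exact hq hvZ
      · exact hq (hCZ hu)
    -- endpoints of e agree on A (assumption hnA)
    have hAiff : u ∈ A ↔ v ∈ A := by
      constructor
      · intro h; by_contra h'
        exact hnA (mem_boundaryF.2 ⟨hedge, u, v, rfl, h, h'⟩)
      · intro h; by_contra h'
        exact hnA (mem_boundaryF.2 ⟨hedge, v, u, Sym2.eq_swap, h, h'⟩)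
    -- e crosses Y
    rw [mem_boundaryF] at heY
    obtain ⟨_, p, q, hpq, hpY, hqY⟩ := heY
    rw [Sym2.eq_iff] at hpq
    rcases hpq with ⟨rfl, rfl⟩ | ⟨rfl, rfl⟩
    · -- u ∈ Y, v ∉ Y
      rcases hpY with ⟨_, huC⟩ | huA
      · exact huC hu
      · exact hqY (Or.inr (hAiff.1 huA))
    · -- v ∈ Y, u ∉ Y
      rcases hpY with ⟨hvZ', _⟩ | hvA
      · exact hvZ hvZ'
      · exact hqY (Or.inr (hAiff.2 hvA))
  -- nonnegativity
  have hFedge := hF.1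
  have hn : ∀ e ∈ F ∪ boundaryF G A, 0 ≤ c e := by
    intro e he
    rw [Finset.mem_union] at he
    rcases he with he | he
    · exact le_of_lt (hpos e (hFedge (Finset.mem_coe.2 he)))
    · exact le_of_lt (hpos e (hAedge (Finset.mem_coe.2 he)))
  have hn' : ∀ e ∈ F ∩ boundaryF G A, 0 ≤ c e := fun e he =>
    hn e (Finset.mem_union_left _ (Finset.mem_inter.1 he).1)
  -- minimality of F against δY
  have hFY : cutWeight c F ≤ cutWeight c (boundaryF G Y) :=
    hF.2.2 (boundaryF G Y) boundaryF_subset_edgeSet hsep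
  have key : cutWeight c (boundaryF G Y) + cutWeight c (boundaryF G C)
      ≤ cutWeight c F + cutWeight c (boundaryF G A) := by
    have e1 : cutWeight c (boundaryF G Y ∪ boundaryF G C)
        + cutWeight c (boundaryF G Y ∩ boundaryF G C)
        = cutWeight c (boundaryF G Y) + cutWeight c (boundaryF G C) :=
      Finset.sum_union_inter
    have e2 : cutWeight c (F ∪ boundaryF G A) + cutWeight c (F ∩ boundaryF G A)
        = cutWeight c F + cutWeight c (boundaryF G A) :=
      Finset.sum_union_inter
    have le1 : cutWeight c (boundaryF G Y ∪ boundaryF G C)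
        ≤ cutWeight c (F ∪ boundaryF G A) := cutWeight_mono hsub1 hn
    have le2 : cutWeight c (boundaryF G Y ∩ boundaryF G C)
        ≤ cutWeight c (F ∩ boundaryF G A) := cutWeight_mono hsub2 hn'
    linarith
  linarith

/-- the boundary of every connected component `C` of `G ∖ E_S` is itself
the minimum-weight cutset separating `T ∩ C` from `T ∖ C`. -/
theorem boundary_of_component_is_minCutset {V : Type} [Fintype V]
    (G : SimpleGraph V) (c : Sym2 V → ℝ)
    (hconn : G.Connected) (hpos : ∀ e ∈ G.edgeSet, 0 < c e)
    (T S : Set V) (hST : S ⊆ T) (hS : S.Nonempty) (hSne : S ≠ T)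
    (F : Finset (Sym2 V)) (hF : IsMinCutset G c T S F)
    (w : V) (C : Set V)
    (hC : C = {v | (G.deleteEdges (F : Set (Sym2 V))).Reachable w v}) :
    IsMinCutset G c T (T ∩ C) (boundaryF G C) := by
  classical
  obtain ⟨hFedge, hFsep, hFmin⟩ := hF
  -- closedness of C
  have hCcl : ∀ ⦃u v : V⦄, u ∈ C → G.Adj u v → s(u, v) ∉ F → v ∈ C := by
    intro u v hu hadj hnF
    rw [hC] at hu ⊢
    exact hu.trans (SimpleGraph.Adj.reachable (by
      rw [SimpleGraph.deleteEdges_adj]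
      exact ⟨hadj, by simpa using hnF⟩))
  have hCreach : ∀ ⦃u v : V⦄, u ∈ C →
      (G.deleteEdges (F : Set (Sym2 V))).Reachable u v → v ∈ C := by
    intro u v hu hr
    rw [hC] at hu ⊢
    exact hu.trans hr
  -- T ∩ C is nonempty
  have htC : (T ∩ C).Nonempty := by
    by_contra hemp
    rw [Set.not_nonempty_iff_eq_empty] at hemp
    have hnotC : ∀ t ∈ T, t ∉ C := by
      intro t ht htc
      exact absurd (Set.mem_inter ht htc) (by rw [hemp]; exact Set.notMem_empty t)
    by_cases hbc : boundaryF G C = ∅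
    · -- C = univ, so T ∩ C = T ≠ ∅
      obtain ⟨s₀, hs₀⟩ := hS
      have hwC : w ∈ C := by rw [hC]; exact SimpleGraph.Reachable.refl w
      have : s₀ ∈ C := by
        have hr : (G.deleteEdges (boundaryF G C : Set (Sym2 V))).Reachable w s₀ := by
          rw [hbc]
          simpa [SimpleGraph.deleteEdges_empty] using (hconn w s₀ : G.Reachable w s₀)
        exact (reach_region hr).1 hwC
      exact hnotC s₀ (hST hs₀) this
    · obtain ⟨e, he⟩ := Finset.nonempty_iff_ne_empty.2 hbc
      rw [mem_boundaryF] at he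
      obtain ⟨hedge, x, u, rfl, hxC, huC⟩ := he
      have heF : s(x, u) ∈ F := by
        by_contra hnF
        exact huC (hCcl hxC ((SimpleGraph.mem_edgeSet G).1 hedge) hnF)
      -- F.erase e separates S from T \ S
      have hsep' : Separates G ((F.erase s(x, u)) : Set (Sym2 V)) S (T \ S) := by
        intro a ha b hb hr
        have hdel : (G.deleteEdges ((F.erase s(x, u)) : Set (Sym2 V))).deleteEdges {s(x, u)}
            = G.deleteEdges (F : Set (Sym2 V)) := by
          rw [SimpleGraph.deleteEdges_deleteEdges]
          congr 1
          ext f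
          simp only [Set.mem_union, Finset.coe_erase, Set.mem_diff, Set.mem_singleton_iff,
            Finset.mem_coe]
          constructor
          · rintro (⟨hf, _⟩ | rfl)
            · exact hf
            · exact heF
          · intro hf
            by_cases hfe : f = s(x, u)
            · exact Or.inr hfe
            · exact Or.inl ⟨hf, hfe⟩
        rcases reach_delete_single (x := x) (u := u) hr with h1 | ⟨h1, h2⟩ | ⟨h1, h2⟩
        · rw [hdel] at h1
          exact hFsep a ha b hb h1
        · rw [hdel] at h1 h2
          exact hnotC a (hST ha) (hCreach hxC h1.symm)
        · rw [hdel] at h1 h2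
          exact hnotC b hb.1 (hCreach hxC h2)
      have hle : cutWeight c F ≤ cutWeight c (F.erase s(x, u)) :=
        hFmin _ (fun f hf => hFedge (by
          rw [Finset.coe_erase] at hf
          exact Finset.mem_coe.2 hf.1)) hsep'
      have heq : cutWeight c (F.erase s(x, u)) + c s(x, u) = cutWeight c F :=
        Finset.sum_erase_add F c heF
      have : (0 : ℝ) < c s(x, u) := hpos _ hedge
      linarith
  obtain ⟨t₀, ht₀T, ht₀C⟩ := htC
  -- the S-side region X of F
  set X : Set V := {v | ∃ s ∈ S, (G.deleteEdges (F : Set (Sym2 V))).Reachable s v} with hX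
  have hSX : S ⊆ X := fun s hs => ⟨s, hs, SimpleGraph.Reachable.refl s⟩
  have hTSX : ∀ t ∈ T \ S, t ∉ X := by
    rintro t ht ⟨s, hs, hr⟩
    exact hFsep s hs t ht hr
  have hXcl : ∀ ⦃u v : V⦄, u ∈ X →
      (G.deleteEdges (F : Set (Sym2 V))).Reachable u v → v ∈ X := by
    rintro u v ⟨s, hs, hr⟩ hr'
    exact ⟨s, hs, hr.trans hr'⟩
  -- F = boundaryF G X
  have hbX : boundaryF G X ⊆ F := by
    intro e he
    rw [mem_boundaryF] at he
    obtain ⟨hedge, u, v, rfl, hu, hv⟩ := he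
    by_contra hnF
    exact hv (hXcl hu (SimpleGraph.Adj.reachable (by
      rw [SimpleGraph.deleteEdges_adj]
      exact ⟨(SimpleGraph.mem_edgeSet G).1 hedge, by simpa using hnF⟩)))
  have hFX : F = boundaryF G X := by
    have h1 : cutWeight c F ≤ cutWeight c (boundaryF G X) :=
      hFmin _ boundaryF_subset_edgeSet (separates_of_region hSX hTSX)
    have h2 : cutWeight c (F \ boundaryF G X) + cutWeight c (boundaryF G X) = cutWeight c F :=
      Finset.sum_sdiff hbX
    have h3 : F \ boundaryF G X = ∅ := by
      by_contra hne
      obtain ⟨e, he⟩ := Finset.nonempty_iff_ne_empty.2 hne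
      have hpos' : (0 : ℝ) < cutWeight c (F \ boundaryF G X) :=
        Finset.sum_pos (fun f hf => hpos f (hFedge (Finset.mem_coe.2 (Finset.mem_sdiff.1 hf).1)))
          ⟨e, he⟩
      linarith
    have h4 : F ⊆ boundaryF G X := Finset.sdiff_eq_empty_iff_subset.1 h3
    exact Finset.Subset.antisymm h4 hbX
  -- the three parts of IsMinCutset
  refine ⟨boundaryF_subset_edgeSet, ?_, ?_⟩
  · exact separates_of_region (Set.inter_subset_right) (fun b hb hbC => hb.2 ⟨hb.1, hbC⟩)
  · intro F' hF'edge hF'sep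
    -- A = reachable set of T ∩ C in G \ F'
    set A : Set V := {v | ∃ t ∈ T ∩ C, (G.deleteEdges (F' : Set (Sym2 V))).Reachable t v} with hA
    have hTCA : T ∩ C ⊆ A := fun t ht => ⟨t, ht, SimpleGraph.Reachable.refl t⟩
    have hTAC : ∀ t ∈ T, t ∈ A → t ∈ C := by
      rintro t ht ⟨t', ht', hr⟩
      by_contra htC'
      exact hF'sep t' ht' t ⟨ht, fun h => htC' h.2⟩ hr
    have hbA : boundaryF G A ⊆ F' := by
      intro e he
      rw [mem_boundaryF] at he
      obtain ⟨hedge, u, v, rfl, hu, hv⟩ := he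
      by_contra hnF
      refine hv ?_
      obtain ⟨t', ht', hr⟩ := hu
      exact ⟨t', ht', hr.trans (SimpleGraph.Adj.reachable (by
        rw [SimpleGraph.deleteEdges_adj]
        exact ⟨(SimpleGraph.mem_edgeSet G).1 hedge, by simpa using hnF⟩))⟩
    have hAF' : cutWeight c (boundaryF G A) ≤ cutWeight c F' :=
      cutWeight_mono hbA (fun e he => le_of_lt (hpos e (hF'edge (Finset.mem_coe.2 he))))
    have hmain : cutWeight c (boundaryF G C) ≤ cutWeight c (boundaryF G A) := by
      by_cases ht₀S : t₀ ∈ S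
      · -- Case 1 : C ⊆ X, Z = X
        have hCX : C ⊆ X := by
          intro v hv
          refine ⟨t₀, ht₀S, ?_⟩
          rw [hC] at hv ht₀C
          exact ht₀C.symm.trans hv
        refine weight_bound G c hpos T S F ⟨hFedge, hFsep, hFmin⟩ C A X hFX hCX hCcl
          boundaryF_subset_edgeSet ?_
        refine separates_of_region ?_ ?_
        · intro s hs
          by_cases hsC : s ∈ C
          · exact Or.inr (hTCA ⟨hST hs, hsC⟩)
          · exact Or.inl ⟨hSX hs, hsC⟩
        · rintro t ht (⟨htX, _⟩ | htA)
          · exact hTSX t ht htX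
          · exact hTSX t ht (hCX (hTAC t ht.1 htA))
      · -- Case 2 : C ∩ X = ∅, Z = Xᶜ
        have hCX : C ⊆ Xᶜ := by
          intro v hv hvX
          have ht₀X : t₀ ∈ X := by
            obtain ⟨s, hs, hr⟩ := hvX
            rw [hC] at hv ht₀C
            exact ⟨s, hs, hr.trans (hv.symm.trans ht₀C)⟩
          exact hTSX t₀ ⟨ht₀T, ht₀S⟩ ht₀X
        have hFXc : F = boundaryF G Xᶜ := by rw [boundaryF_compl]; exact hFX
        refine weight_bound G c hpos T S F ⟨hFedge, hFsep, hFmin⟩ C A Xᶜ hFXc hCX hCcl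
          boundaryF_subset_edgeSet ?_
        refine separates_of_region' ?_ ?_
        · rintro s hs (⟨hsXc, _⟩ | hsA)
          · exact hsXc (hSX hs)
          · exact hCX (hTAC s (hST hs) hsA) (hSX hs)
        · intro t ht
          by_cases htC' : t ∈ C
          · exact Or.inr (hTCA ⟨ht.1, htC'⟩)
          · exact Or.inl ⟨fun h => hTSX t ht h, htC'⟩
    linarith
end

section
/- Let G be a finite connected weighted graph with terminals T, S ⊂ T nonempty and proper, and E_S the minimum cutset separating S from T∖S. Then there exists a connected component C of G∖E_S such that removing δ(C) from G leaves exactly two connected components (i.e., C is an elementary component). -/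
/-- Number of connected components of a graph. -/
noncomputable def numComponents {V : Type} (G : SimpleGraph V) : ℕ :=
  Nat.card G.ConnectedComponent

namespace SimpleGraph

variable {V W : Type} (G : SimpleGraph V) (f : V → W)

def quotientGraph : SimpleGraph W :=
  fromRel fun x y => ∃ u v, G.Adj u v ∧ f u = x ∧ f v = y

variable {G f}

theorem quotientGraph_adj {x y : W} :
    (G.quotientGraph f).Adj x y ↔ x ≠ y ∧ ∃ u v, G.Adj u v ∧ f u = x ∧ f v = y := by
  refine (fromRel_adj _ _ _).trans (and_congr_right fun _ => or_iff_left_of_imp ?_)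
  rintro ⟨u, v, huv, rfl, rfl⟩
  exact ⟨v, u, huv.symm, rfl, rfl⟩

theorem Reachable.quotientGraph {u v : V} (h : G.Reachable u v) :
    (G.quotientGraph f).Reachable (f u) (f v) := by
  obtain ⟨p⟩ := h
  induction p with
  | nil => rfl
  | @cons x y _ hxy _ ih =>
    by_cases hfxy : f x = f y
    · rwa [hfxy]
    · exact (quotientGraph_adj.mpr ⟨hfxy, x, y, hxy, rfl, rfl⟩).reachable.trans ih

theorem Reachable.of_quotientGraph (hf : ∀ u v, f u = f v → G.Reachable u v) {u v : V}
    (h : (G.quotientGraph f).Reachable (f u) (f v)) : G.Reachable u v := by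
  obtain ⟨p⟩ := h
  suffices ∀ {x y} (p : (G.quotientGraph f).Walk x y) (u v : V), f u = x → f v = y →
      G.Reachable u v from this p u v rfl rfl
  intro x y p
  induction p with
  | nil => exact fun u v hu hv => hf u v (hu.trans hv.symm)
  | cons hxy _ ih =>
    rintro u v rfl rfl
    obtain ⟨-, u', v', huv', hu', hv'⟩ := quotientGraph_adj.mp hxy
    exact ((hf u u' hu'.symm).trans huv'.reachable).trans (ih v' v hv' rfl)

theorem Preconnected.quotientGraph (hG : G.Preconnected) (hf : f.Surjective) :
    (G.quotientGraph f).Preconnected := by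
  intro x y
  obtain ⟨u, rfl⟩ := hf x
  obtain ⟨v, rfl⟩ := hf y
  exact (hG u v).quotientGraph

theorem Reachable.mem_iff {C : Set V} (hC : ∀ u v, G.Adj u v → (u ∈ C ↔ v ∈ C)) {u v : V}
    (h : G.Reachable u v) : u ∈ C ↔ v ∈ C := by
  obtain ⟨p⟩ := h
  induction p with
  | nil => rfl
  | cons huv _ ih => exact (hC _ _ huv).trans ih

theorem card_connectedComponent_eq_two {w t : V} (hwt : ¬G.Reachable w t)
    (hcover : ∀ v, G.Reachable w v ∨ G.Reachable t v) : Nat.card G.ConnectedComponent = 2 := by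
  rw [Nat.card_eq_two_iff]
  refine ⟨G.connectedComponentMk w, G.connectedComponentMk t,
    fun h => hwt (ConnectedComponent.exact h), Set.eq_univ_of_forall fun x => ?_⟩
  induction x using ConnectedComponent.ind with
  | h v =>
    exact (hcover v).imp (fun h => (ConnectedComponent.sound h).symm)
      fun h => (ConnectedComponent.sound h).symm

end SimpleGraph

section Boundary

open SimpleGraph

variable {V : Type} [Fintype V]

theorem deleteEdges_boundaryF_adj (G : SimpleGraph V) (C : Set V) {u v : V} :
    (G.deleteEdges (boundaryF G C)).Adj u v ↔ G.Adj u v ∧ (u ∈ C ↔ v ∈ C) := by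
  simp only [deleteEdges_adj, boundaryF, Set.Finite.coe_toFinset]
  refine and_congr_right fun huv => ?_
  simp only [Set.mem_ofPred_eq, mem_edgeSet, huv, true_and, Sym2.eq_iff]
  constructor
  · exact fun h => ⟨fun hu => by_contra fun hv => h ⟨u, v, .inl ⟨rfl, rfl⟩, hu, hv⟩,
      fun hv => by_contra fun hu => h ⟨v, u, .inr ⟨rfl, rfl⟩, hv, hu⟩⟩
  · rintro h ⟨u', v', (⟨rfl, rfl⟩ | ⟨rfl, rfl⟩), hu', hv'⟩ <;> tauto

theorem exists_numComponents_deleteEdges_boundaryF_eq_two {G G' : SimpleGraph V}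
    (hG : G.Connected) (hG'G : G' ≤ G) (hG' : ¬G'.Preconnected) :
    ∃ w, numComponents (G.deleteEdges (boundaryF G {v | G'.Reachable w v})) = 2 := by
  set f := G'.connectedComponentMk
  have hf : f.Surjective := Quot.mk_surjective
  have : Nonempty V := hG.nonempty
  have hH : (G.quotientGraph f).Connected := ⟨hG.preconnected.quotientGraph hf⟩
  obtain ⟨a, ha⟩ := hH.exists_preconnected_induce_compl_singleton_of_finite
  obtain ⟨w, rfl⟩ := hf a
  refine ⟨w, ?_⟩
  set C : Set V := {v | G'.Reachable w v}
  set K := G.deleteEdges (boundaryF G C)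
  have hmemC (v : V) : v ∈ C ↔ f w = f v := ConnectedComponent.eq.symm
  have hG'K : G' ≤ K := fun u v huv => (deleteEdges_boundaryF_adj G C).mpr
    ⟨hG'G huv, fun hu => hu.trans huv.reachable, fun hv => hv.trans huv.symm.reachable⟩
  have houtside (u v : V) (hu : u ∉ C) (hv : v ∉ C) : K.Reachable u v := by
    -- an edge of `G` between two components other than `C` does not lie in `δ(C)`
    let φ : (G.quotientGraph f).induce {f w}ᶜ →g K.quotientGraph f :=
      { toFun := Subtype.val
        map_rel' := by
          rintro ⟨_, hx⟩ ⟨_, hy⟩ hxy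
          obtain ⟨hne, u', v', huv', rfl, rfl⟩ := quotientGraph_adj.mp hxy
          refine quotientGraph_adj.mpr ⟨hne, u', v', (deleteEdges_boundaryF_adj G C).mpr
            ⟨huv', iff_of_false ?_ ?_⟩, rfl, rfl⟩
          · exact fun h => hx ((hmemC u').mp h).symm
          · exact fun h => hy ((hmemC v').mp h).symm }
    refine Reachable.of_quotientGraph (fun u v h => (ConnectedComponent.exact h).mono hG'K) ?_
    exact (ha ⟨f u, fun h => hu ((hmemC u).mpr h.symm)⟩
      ⟨f v, fun h => hv ((hmemC v).mpr h.symm)⟩).map φ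
  obtain ⟨t, ht⟩ : ∃ t, t ∉ C := by
    by_contra! hall
    exact hG' fun u v => (hall u).symm.trans (hall v)
  have hK (u v : V) (huv : K.Adj u v) : u ∈ C ↔ v ∈ C :=
    ((deleteEdges_boundaryF_adj G C).mp huv).2
  refine card_connectedComponent_eq_two (fun hwt => ht ((hwt.mem_iff hK).mp (Reachable.refl w)))
    fun v => ?_
  by_cases hv : v ∈ C
  · exact .inl (hv.mono hG'K)
  · exact .inr (houtside t v ht hv)

end Boundary

theorem exists_elementary_component_general {V : Type} [Fintype V]
    (G : SimpleGraph V) (c : Sym2 V → ℝ)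
    (hconn : G.Connected)
    (T S : Set V) (hST : S ⊆ T) (hS : S.Nonempty) (hSne : S ≠ T)
    (F : Finset (Sym2 V)) (hF : IsMinCutset G c T S F) :
    ∃ w : V,
      numComponents (G.deleteEdges
        (↑(boundaryF G {v | (G.deleteEdges (F : Set (Sym2 V))).Reachable w v}) :
          Set (Sym2 V))) = 2 := by
  obtain ⟨s, hs⟩ := hS
  obtain ⟨t, ht, hts⟩ := Set.exists_of_ssubset (hST.ssubset_of_ne hSne)
  exact exists_numComponents_deleteEdges_boundaryF_eq_two hconn (G.deleteEdges_le _)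
    fun h => hF.2.1 s hs t ⟨ht, hts⟩ (h s t)

/-- some connected component `C` of `G ∖ E_S` is elementary, i.e.
removing its boundary `δ(C)` from `G` leaves exactly two connected components. -/
theorem exists_elementary_component {V : Type} [Fintype V]
    (G : SimpleGraph V) (c : Sym2 V → ℝ)
    (hconn : G.Connected) (hpos : ∀ e ∈ G.edgeSet, 0 < c e)
    (T S : Set V) (hST : S ⊆ T) (hS : S.Nonempty) (hSne : S ≠ T)
    (F : Finset (Sym2 V)) (hF : IsMinCutset G c T S F) :
    ∃ w : V,
      numComponents (G.deleteEdges
        (↑(boundaryF G {v | (G.deleteEdges (F : Set (Sym2 V))).Reachable w v}) :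
          Set (Sym2 V))) = 2 :=
  exists_elementary_component_general G c hconn T S hST hS hSne F hF
end

section
/- Let G and H be finite connected weighted graphs with the same terminal set T, and suppose their families of elementary terminal subsets coincide: T_e(G) = T_e(H), where T_e(G) = {S ⊂ T : G∖E_S has exactly two components}. If for every S ∈ T_e(G) we have mincut_G(S) ≤ mincut_H(S) ≤ q·mincut_G(S) for some q ≥ 1, then for every nonempty proper S ⊂ T, mincut_G(S) ≤ mincut_H(S) ≤ q·mincut_G(S). -/
open Set SimpleGraph

theorem le_of_forall_le_or_split {α : Type*} [Finite α] {p : α → Prop} {f g : α → ℝ}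
    (hg : ∀ a, p a → 0 < g a)
    (h : ∀ a, p a → f a ≤ g a ∨
      ∃ b c, p b ∧ p c ∧ g b + g c ≤ g a ∧ f a ≤ f b + f c) :
    ∀ a, p a → f a ≤ g a := by
  have : IsTrans α (fun a b => g a < g b) := ⟨fun _ _ _ => lt_trans⟩
  have : Std.Irrefl (fun a b : α => g a < g b) := ⟨fun _ => lt_irrefl _⟩
  intro a
  induction a using (Finite.wellFounded_of_trans_of_irrefl (fun a b => g a < g b)).induction with
  | _ a ih =>
    intro ha
    rcases h a ha with hle | ⟨b, c, hb, hc, hsplit, hsub⟩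
    · exact hle
    · have hbc := hg b hb
      have hcc := hg c hc
      have := ih b (by linarith) hb
      have := ih c (by linarith) hc
      linarith

namespace SimpleGraph

variable {V : Type*} {G : SimpleGraph V}

def reachableFrom (G : SimpleGraph V) (A : Set V) : Set V :=
  {v | ∃ a ∈ A, G.Reachable a v}

lemma subset_reachableFrom (A : Set V) : A ⊆ G.reachableFrom A :=
  fun a ha => ⟨a, ha, .refl a⟩

lemma reachableFrom_mono {A B : Set V} (h : A ⊆ B) : G.reachableFrom A ⊆ G.reachableFrom B :=
  fun _ ⟨a, ha, hr⟩ => ⟨a, h ha, hr⟩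

lemma Reachable.exists_adj_mem_notMem {a b : V} (h : G.Reachable a b) {U : Set V}
    (ha : a ∈ U) (hb : b ∉ U) : ∃ u ∈ U, ∃ v ∉ U, G.Adj u v := by
  obtain ⟨p⟩ := h
  obtain ⟨d, -, hd₁, hd₂⟩ := p.exists_boundary_dart U ha hb
  exact ⟨d.fst, hd₁, d.snd, hd₂, d.adj⟩

lemma mem_of_adj_of_mem_reachableFrom {F : Set (Sym2 V)} {A : Set V} {u v : V}
    (hadj : G.Adj u v) (hu : u ∈ (G.deleteEdges F).reachableFrom A)
    (hv : v ∉ (G.deleteEdges F).reachableFrom A) : s(u, v) ∈ F := by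
  by_contra he
  obtain ⟨a, ha, hr⟩ := hu
  exact hv ⟨a, ha, hr.trans (deleteEdges_adj.2 ⟨hadj, he⟩).reachable⟩

end SimpleGraph

lemma numComponents_eq_two_of_not_reachable {V : Type} {G : SimpleGraph V} {a b : V}
    (hab : ¬ G.Reachable a b) (h : ∀ v, G.Reachable a v ∨ G.Reachable b v) :
    numComponents G = 2 := by
  rw [numComponents, Nat.card_eq_two_iff]
  refine ⟨G.connectedComponentMk a, G.connectedComponentMk b,
    fun he => hab (ConnectedComponent.exact he), ?_⟩
  ext C
  induction C using ConnectedComponent.ind with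
  | _ v =>
    simp only [mem_insert_iff, mem_singleton_iff, mem_univ, iff_true,
      ConnectedComponent.eq]
    exact (h v).imp Reachable.symm Reachable.symm

lemma cutWeight_union_le {V : Type} [DecidableEq (Sym2 V)] {c : Sym2 V → ℝ}
    {F F' : Finset (Sym2 V)} (hc : ∀ e ∈ F, 0 ≤ c e) :
    cutWeight c (F ∪ F') ≤ cutWeight c F + cutWeight c F' := by
  have hinter : 0 ≤ cutWeight c (F ∩ F') :=
    Finset.sum_nonneg fun e he => hc e (Finset.mem_inter.1 he).1
  have := Finset.sum_union_inter (s₁ := F) (s₂ := F') (f := c)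
  unfold cutWeight at *
  linarith

section EdgesMeeting

open Classical

variable {V : Type}

noncomputable def edgesMeeting (F : Finset (Sym2 V)) (C : Set V) : Finset (Sym2 V) :=
  F.filter fun e => ∃ v ∈ e, v ∈ C

noncomputable def edgesAvoiding (F : Finset (Sym2 V)) (C : Set V) : Finset (Sym2 V) :=
  F.filter fun e => ¬ ∃ v ∈ e, v ∈ C

lemma mem_edgesMeeting {F : Finset (Sym2 V)} {C : Set V} {e : Sym2 V} :
    e ∈ edgesMeeting F C ↔ e ∈ F ∧ ∃ v ∈ e, v ∈ C :=
  Finset.mem_filter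

lemma mem_edgesAvoiding {F : Finset (Sym2 V)} {C : Set V} {e : Sym2 V} :
    e ∈ edgesAvoiding F C ↔ e ∈ F ∧ ¬ ∃ v ∈ e, v ∈ C :=
  Finset.mem_filter

lemma cutWeight_edgesMeeting_add_edgesAvoiding (c : Sym2 V → ℝ) (F : Finset (Sym2 V))
    (C : Set V) :
    cutWeight c (edgesMeeting F C) + cutWeight c (edgesAvoiding F C) = cutWeight c F :=
  Finset.sum_filter_add_sum_filter_not F _ c

end EdgesMeeting

section Separates

variable {V : Type} {G : SimpleGraph V} {F F' : Set (Sym2 V)} {A B : Set V}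

lemma Separates.mono (h : Separates G F A B) (hF : F ⊆ F') : Separates G F' A B :=
  fun a ha b hb hr => h a ha b hb (hr.mono (deleteEdges_anti hF))

lemma Separates.symm (h : Separates G F A B) : Separates G F B A :=
  fun b hb a ha hr => h a ha b hb hr.symm

lemma Separates.disjoint_reachableFrom (h : Separates G F A B) :
    Disjoint ((G.deleteEdges F).reachableFrom A) ((G.deleteEdges F).reachableFrom B) :=
  Set.disjoint_left.2 fun _ ⟨a, ha, hra⟩ ⟨b, hb, hrb⟩ => h a ha b hb (hra.trans hrb.symm)

lemma separates_of_forall_adj {U : Set V} (hA : A ⊆ U) (hB : Disjoint B U)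
    (hU : ∀ u ∈ U, ∀ v ∉ U, G.Adj u v → s(u, v) ∈ F) : Separates G F A B := by
  intro a ha b hb hr
  obtain ⟨u, hu, v, hv, hadj⟩ :=
    hr.exists_adj_mem_notMem (hA ha) (Set.disjoint_left.1 hB hb)
  exact (deleteEdges_adj.1 hadj).2 (hU u hu v hv (deleteEdges_adj.1 hadj).1)

lemma Separates.exists_eq_mk_notMem_of_not_separates_diff {e : Sym2 V} (h : Separates G F A B)
    (h' : ¬ Separates G (F \ {e}) A B) :
    ∃ p ∈ (G.deleteEdges F).reachableFrom A, ∃ q ∉ (G.deleteEdges F).reachableFrom A,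
      e = s(p, q) := by
  simp only [Separates, not_forall, not_not] at h'
  obtain ⟨a, ha, b, hb, hr⟩ := h'
  have hb' : b ∉ (G.deleteEdges F).reachableFrom A := fun hb' =>
    Set.disjoint_left.1 h.disjoint_reachableFrom hb' (subset_reachableFrom B hb)
  obtain ⟨p, hp, q, hq, hadj⟩ := hr.exists_adj_mem_notMem (subset_reachableFrom A ha) hb'
  rw [deleteEdges_adj] at hadj
  have hpqF := mem_of_adj_of_mem_reachableFrom hadj.1 hp hq
  refine ⟨p, hp, q, hq, ?_⟩
  by_contra hne
  exact hadj.2 ⟨hpqF, Ne.symm hne⟩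

lemma Separates.exists_eq_mk_of_not_separates_diff {e : Sym2 V} (h : Separates G F A B)
    (h' : ¬ Separates G (F \ {e}) A B) :
    ∃ p ∈ (G.deleteEdges F).reachableFrom A, ∃ q ∈ (G.deleteEdges F).reachableFrom B,
      e = s(p, q) := by
  obtain ⟨p, hp, q, -, rfl⟩ := h.exists_eq_mk_notMem_of_not_separates_diff h'
  obtain ⟨p', hp', q', -, he⟩ :=
    h.symm.exists_eq_mk_notMem_of_not_separates_diff fun hs => h' hs.symm
  have hpp' : p ≠ p' := fun hpp' =>
    Set.disjoint_left.1 h.disjoint_reachableFrom hp (hpp' ▸ hp')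
  rcases Sym2.eq_iff.1 he with ⟨rfl, -⟩ | ⟨rfl, rfl⟩
  · exact absurd rfl hpp'
  · exact ⟨_, hp, _, hp', rfl⟩

end Separates

section Terminals

variable {V τ : Type} {G : SimpleGraph V} {c : Sym2 V → ℝ} {t : τ ↪ V} {S : Set τ}
  {F : Finset (Sym2 V)} {X : Set V}

lemma apply_mem_range_sdiff_image_iff {y : τ} : t y ∈ range t \ t '' S ↔ y ∉ S := by
  rw [range_sdiff_image t.injective, t.injective.mem_set_image, mem_compl_iff]

lemma IsMinCutset.not_reachable (hF : IsMinCutset G c (range t) (t '' S) F) {x y : τ}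
    (hx : x ∈ S) (hy : y ∉ S) : ¬ (G.deleteEdges F).Reachable (t x) (t y) :=
  hF.2.1 _ (mem_image_of_mem t hx) _ (apply_mem_range_sdiff_image_iff.2 hy)

lemma IsMinCutset.apply_mem_reachableFrom_iff (hF : IsMinCutset G c (range t) (t '' S) F)
    {y : τ} : t y ∈ (G.deleteEdges F).reachableFrom (t '' S) ↔ y ∈ S :=
  ⟨fun ⟨_, ⟨x, hx, rfl⟩, hr⟩ => by_contra fun hy => hF.not_reachable hx hy hr,
    fun hy => subset_reachableFrom _ (mem_image_of_mem t hy)⟩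

lemma separates_compl_iff {F : Set (Sym2 V)} :
    Separates G F (t '' Sᶜ) (range t \ t '' Sᶜ) ↔ Separates G F (t '' S) (range t \ t '' S) := by
  rw [range_sdiff_image t.injective, range_sdiff_image t.injective, compl_compl]
  exact ⟨Separates.symm, Separates.symm⟩

lemma IsMinCutset.compl (hF : IsMinCutset G c (range t) (t '' S) F) :
    IsMinCutset G c (range t) (t '' Sᶜ) F :=
  ⟨hF.1, separates_compl_iff.2 hF.2.1,
    fun F' hF' hsep => hF.2.2 F' hF' (separates_compl_iff.1 hsep)⟩

lemma Separates.union_image {A B : Set τ} {FA FB : Set (Sym2 V)}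
    (hA : Separates G FA (t '' A) (range t \ t '' A))
    (hB : Separates G FB (t '' B) (range t \ t '' B)) :
    Separates G (FA ∪ FB) (t '' (A ∪ B)) (range t \ t '' (A ∪ B)) := by
  rw [image_union]
  rintro a (ha | ha) b ⟨hb, hbAB⟩
  · exact (hA.mono subset_union_left) a ha b ⟨hb, fun h => hbAB (Or.inl h)⟩
  · exact (hB.mono subset_union_right) a ha b ⟨hb, fun h => hbAB (Or.inr h)⟩

lemma IsMinCutset.cutWeight_le_add [DecidableEq (Sym2 V)] (hc : ∀ e ∈ G.edgeSet, 0 ≤ c e)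
    {A B : Set τ} {FA FB : Finset (Sym2 V)} (hF : IsMinCutset G c (range t) (t '' S) F)
    (hFA : IsMinCutset G c (range t) (t '' A) FA) (hFB : IsMinCutset G c (range t) (t '' B) FB)
    (hAB : A ∪ B = S ∨ A ∪ B = Sᶜ) :
    cutWeight c F ≤ cutWeight c FA + cutWeight c FB := by
  have hsep : Separates G ((FA ∪ FB : Finset (Sym2 V)) : Set (Sym2 V)) (t '' S)
      (range t \ t '' S) := by
    have h := hFA.2.1.union_image hFB.2.1
    rw [← Finset.coe_union] at h
    rcases hAB with hAB | hAB
    · rwa [hAB] at h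
    · rwa [hAB, separates_compl_iff] at h
  calc cutWeight c F ≤ cutWeight c (FA ∪ FB) :=
        hF.2.2 _ (by rw [Finset.coe_union]; exact union_subset hFA.1 hFB.1) hsep
    _ ≤ cutWeight c FA + cutWeight c FB :=
        cutWeight_union_le fun e he => hc e (hFA.1 he)

lemma IsMinCutset.cutWeight_pos (hconn : G.Connected) (hpos : ∀ e ∈ G.edgeSet, 0 < c e)
    (hS : S.Nonempty) (hS' : S ≠ univ) (hF : IsMinCutset G c (range t) (t '' S) F) :
    0 < cutWeight c F := by
  obtain ⟨x, hx⟩ := hS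
  obtain ⟨y, hy⟩ := ne_univ_iff_exists_notMem S |>.1 hS'
  have hne : F.Nonempty := by
    rw [Finset.nonempty_iff_ne_empty]
    rintro rfl
    exact hF.not_reachable hx hy (by simpa using hconn.preconnected (t x) (t y))
  exact Finset.sum_pos (fun e he => hpos e (hF.1 he)) hne

lemma IsMinCutset.exists_eq_mk (hpos : ∀ e ∈ G.edgeSet, 0 < c e)
    (hF : IsMinCutset G c (range t) (t '' S) F) {e : Sym2 V} (he : e ∈ F) :
    ∃ p ∈ (G.deleteEdges F).reachableFrom (t '' S),
      ∃ q ∈ (G.deleteEdges F).reachableFrom (range t \ t '' S), e = s(p, q) := by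
  classical
  -- by minimality, `F.erase e` is lighter than `F` and so cannot separate
  refine hF.2.1.exists_eq_mk_of_not_separates_diff fun hsep => ?_
  have hle := hF.2.2 (F.erase e) (fun e' he' => hF.1 (Finset.mem_of_mem_erase he'))
    (by rwa [Finset.coe_erase])
  have := Finset.sum_erase_add F c he
  have := hpos e (hF.1 he)
  unfold cutWeight at hle
  linarith

lemma IsMinCutset.mem_reachableFrom_range (hconn : G.Connected)
    (hpos : ∀ e ∈ G.edgeSet, 0 < c e) (hS : S.Nonempty)
    (hF : IsMinCutset G c (range t) (t '' S) F) (w : V) :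
    w ∈ (G.deleteEdges F).reachableFrom (range t) := by
  by_contra hw
  obtain ⟨x, -⟩ := hS
  obtain ⟨u, hu, v, hv, hadj⟩ := (hconn.preconnected (t x) w).exists_adj_mem_notMem
    (subset_reachableFrom _ (mem_range_self x)) hw
  obtain ⟨p, hp, q, hq, hpq⟩ :=
    hF.exists_eq_mk hpos (mem_of_adj_of_mem_reachableFrom hadj hu hv)
  rcases Sym2.eq_iff.1 hpq with ⟨-, rfl⟩ | ⟨-, rfl⟩
  · exact hv (reachableFrom_mono sdiff_subset hq)
  · exact hv (reachableFrom_mono (image_subset_range t S) hp)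

lemma IsMinCutset.notMem_reachableFrom_of_mem (hpos : ∀ e ∈ G.edgeSet, 0 < c e)
    (hF : IsMinCutset G c (range t) (t '' S) F) {u v : V} (he : s(u, v) ∈ F)
    (hu : u ∈ (G.deleteEdges F).reachableFrom (t '' S)) :
    v ∉ (G.deleteEdges F).reachableFrom (t '' S) := by
  obtain ⟨p, -, q, hq, hpq⟩ := hF.exists_eq_mk hpos he
  have hdisj := hF.2.1.disjoint_reachableFrom
  rcases Sym2.eq_iff.1 hpq with ⟨-, rfl⟩ | ⟨rfl, -⟩
  · exact Set.disjoint_right.1 hdisj hq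
  · exact absurd hq (Set.disjoint_left.1 hdisj hu)

lemma IsMinCutset.numComponents_eq_two (hconn : G.Connected)
    (hpos : ∀ e ∈ G.edgeSet, 0 < c e) (hS : S.Nonempty) (hS' : S ≠ univ)
    (hF : IsMinCutset G c (range t) (t '' S) F)
    (hin : ∀ x ∈ S, ∀ y ∈ S, (G.deleteEdges F).Reachable (t x) (t y))
    (hout : ∀ x ∉ S, ∀ y ∉ S, (G.deleteEdges F).Reachable (t x) (t y)) :
    numComponents (G.deleteEdges F) = 2 := by
  obtain ⟨x, hx⟩ := hS
  obtain ⟨y, hy⟩ := ne_univ_iff_exists_notMem S |>.1 hS'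
  refine numComponents_eq_two_of_not_reachable (hF.not_reachable hx hy) fun w => ?_
  obtain ⟨_, ⟨z, rfl⟩, hz⟩ := hF.mem_reachableFrom_range hconn hpos ⟨x, hx⟩ w
  by_cases hzS : z ∈ S
  · exact Or.inl ((hin x hx z hzS).trans hz)
  · exact Or.inr ((hout y hy z hzS).trans hz)

lemma separates_edgesMeeting_reachableFrom :
    Separates G (edgesMeeting F ((G.deleteEdges F).reachableFrom X) : Set (Sym2 V))
      (t '' (t ⁻¹' (G.deleteEdges F).reachableFrom X))
      (range t \ t '' (t ⁻¹' (G.deleteEdges F).reachableFrom X)) := by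
  refine separates_of_forall_adj (U := (G.deleteEdges F).reachableFrom X)
    (image_preimage_subset _ _) (Set.disjoint_left.2 ?_) fun u hu v hv hadj => ?_
  · rintro _ ⟨⟨y, rfl⟩, hy⟩ hyC
    exact hy (mem_image_of_mem t hyC)
  · exact mem_edgesMeeting.2
      ⟨mem_of_adj_of_mem_reachableFrom hadj hu hv, u, Sym2.mem_mk_left u v, hu⟩

lemma IsMinCutset.separates_edgesAvoiding_reachableFrom (hpos : ∀ e ∈ G.edgeSet, 0 < c e)
    (hF : IsMinCutset G c (range t) (t '' S) F) (hX : X ⊆ t '' S) :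
    Separates G (edgesAvoiding F ((G.deleteEdges F).reachableFrom X) : Set (Sym2 V))
      (t '' (S \ t ⁻¹' (G.deleteEdges F).reachableFrom X))
      (range t \ t '' (S \ t ⁻¹' (G.deleteEdges F).reachableFrom X)) := by
  set C := (G.deleteEdges F).reachableFrom X
  set R := (G.deleteEdges F).reachableFrom (t '' S)
  have hCR : C ⊆ R := reachableFrom_mono hX
  refine separates_of_forall_adj (U := R \ C)
    (by rintro _ ⟨y, ⟨hyS, hyC⟩, rfl⟩; exact ⟨hF.apply_mem_reachableFrom_iff.2 hyS, hyC⟩)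
    (Set.disjoint_left.2 ?_) fun u hu v hv hadj => ?_
  · rintro _ ⟨⟨y, rfl⟩, hy⟩ ⟨hyR, hyC⟩
    exact hy (mem_image_of_mem t ⟨hF.apply_mem_reachableFrom_iff.1 hyR, hyC⟩)
  have hvR : v ∉ R := fun hvR => by
    have hvC : v ∈ C := by_contra fun h => hv ⟨hvR, h⟩
    exact hF.notMem_reachableFrom_of_mem hpos
      (mem_of_adj_of_mem_reachableFrom hadj.symm hvC hu.2) (hCR hvC) hu.1
  refine mem_edgesAvoiding.2 ⟨mem_of_adj_of_mem_reachableFrom hadj hu.1 hvR, ?_⟩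
  rintro ⟨w, hw, hwC⟩
  rcases Sym2.mem_iff.1 hw with rfl | rfl
  · exact hu.2 hwC
  · exact hvR (hCR hwC)

lemma IsMinCutset.exists_split_of_not_reachable (hpos : ∀ e ∈ G.edgeSet, 0 < c e)
    (hS' : S ≠ univ) (hF : IsMinCutset G c (range t) (t '' S) F) {x₀ y₀ : τ} (hx₀ : x₀ ∈ S)
    (hy₀ : y₀ ∈ S) (hn : ¬ (G.deleteEdges F).Reachable (t x₀) (t y₀)) :
    ∃ A B : Set τ, A.Nonempty ∧ A ≠ univ ∧ B.Nonempty ∧ B ≠ univ ∧ A ∪ B = S ∧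
      ∀ FA FB : Finset (Sym2 V), IsMinCutset G c (range t) (t '' A) FA →
        IsMinCutset G c (range t) (t '' B) FB →
        cutWeight c FA + cutWeight c FB ≤ cutWeight c F := by
  have hX : {t x₀} ⊆ t '' S := singleton_subset_iff.2 (mem_image_of_mem t hx₀)
  set C := (G.deleteEdges F).reachableFrom {t x₀}
  have hAS : t ⁻¹' C ⊆ S := fun y hy =>
    hF.apply_mem_reachableFrom_iff.1 (reachableFrom_mono hX hy)
  have hx₀A : x₀ ∈ t ⁻¹' C := subset_reachableFrom _ rfl
  have hy₀A : y₀ ∉ t ⁻¹' C := fun ⟨_, ha, hr⟩ => hn (ha ▸ hr)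
  refine ⟨t ⁻¹' C, S \ t ⁻¹' C, ⟨x₀, hx₀A⟩, fun h => hS' (eq_univ_of_univ_subset (h ▸ hAS)),
    ⟨y₀, hy₀, hy₀A⟩, fun h => (h ▸ mem_univ x₀ : x₀ ∈ S \ t ⁻¹' C).2 hx₀A,
    union_sdiff_cancel hAS, fun FA FB hFA hFB => ?_⟩
  have hA := hFA.2.2 _ (fun e he => hF.1 (mem_edgesMeeting.1 he).1)
    separates_edgesMeeting_reachableFrom
  have hB := hFB.2.2 _ (fun e he => hF.1 (mem_edgesAvoiding.1 he).1)
    (hF.separates_edgesAvoiding_reachableFrom hpos hX)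
  linarith [cutWeight_edgesMeeting_add_edgesAvoiding c F C]

lemma IsMinCutset.exists_split (hconn : G.Connected) (hpos : ∀ e ∈ G.edgeSet, 0 < c e)
    (hS : S.Nonempty) (hS' : S ≠ univ) (hF : IsMinCutset G c (range t) (t '' S) F)
    (hk : numComponents (G.deleteEdges F) ≠ 2) :
    ∃ A B : Set τ, A.Nonempty ∧ A ≠ univ ∧ B.Nonempty ∧ B ≠ univ ∧ (A ∪ B = S ∨ A ∪ B = Sᶜ) ∧
      ∀ FA FB : Finset (Sym2 V), IsMinCutset G c (range t) (t '' A) FA →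
        IsMinCutset G c (range t) (t '' B) FB →
        cutWeight c FA + cutWeight c FB ≤ cutWeight c F := by
  by_cases hin : ∀ x ∈ S, ∀ y ∈ S, (G.deleteEdges F).Reachable (t x) (t y)
  · by_cases hout : ∀ x ∉ S, ∀ y ∉ S, (G.deleteEdges F).Reachable (t x) (t y)
    · exact absurd (hF.numComponents_eq_two hconn hpos hS hS' hin hout) hk
    push Not at hout
    obtain ⟨x, hx, y, hy, hn⟩ := hout
    obtain ⟨A, B, hA, hA', hB, hB', hAB, hw⟩ :=
      hF.compl.exists_split_of_not_reachable hpos (compl_ne_univ.2 hS) hx hy hn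
    exact ⟨A, B, hA, hA', hB, hB', Or.inr hAB, hw⟩
  push Not at hin
  obtain ⟨x, hx, y, hy, hn⟩ := hin
  obtain ⟨A, B, hA, hA', hB, hB', hAB, hw⟩ := hF.exists_split_of_not_reachable hpos hS' hx hy hn
  exact ⟨A, B, hA, hA', hB, hB', Or.inl hAB, hw⟩

end Terminals

theorem cutWeight_le_mul_of_forall_elementary {V₁ V₂ τ : Type} [Finite τ]
    {G₁ : SimpleGraph V₁} {G₂ : SimpleGraph V₂} {c₁ : Sym2 V₁ → ℝ} {c₂ : Sym2 V₂ → ℝ}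
    {t₁ : τ ↪ V₁} {t₂ : τ ↪ V₂} {E₁ : Set τ → Finset (Sym2 V₁)} {E₂ : Set τ → Finset (Sym2 V₂)}
    (hconn : G₁.Connected) (hc₁ : ∀ e ∈ G₁.edgeSet, 0 < c₁ e)
    (hE₁ : ∀ S : Set τ, S.Nonempty → S ≠ univ → IsMinCutset G₁ c₁ (range t₁) (t₁ '' S) (E₁ S))
    (hc₂ : ∀ e ∈ G₂.edgeSet, 0 ≤ c₂ e)
    (hE₂ : ∀ S : Set τ, S.Nonempty → S ≠ univ → IsMinCutset G₂ c₂ (range t₂) (t₂ '' S) (E₂ S))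
    {k : ℝ} (hk : 0 < k)
    (helem : ∀ S : Set τ, S.Nonempty → S ≠ univ → numComponents (G₁.deleteEdges (E₁ S)) = 2 →
      cutWeight c₂ (E₂ S) ≤ k * cutWeight c₁ (E₁ S)) :
    ∀ S : Set τ, S.Nonempty → S ≠ univ → cutWeight c₂ (E₂ S) ≤ k * cutWeight c₁ (E₁ S) := by
  classical
  refine fun S hS hS' => le_of_forall_le_or_split (p := fun S => S.Nonempty ∧ S ≠ univ)
    (f := fun S => cutWeight c₂ (E₂ S)) (g := fun S => k * cutWeight c₁ (E₁ S))
    (fun S ⟨hS, hS'⟩ => mul_pos hk ((hE₁ S hS hS').cutWeight_pos hconn hc₁ hS hS'))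
    (fun S ⟨hS, hS'⟩ => ?_) S ⟨hS, hS'⟩
  by_cases h2 : numComponents (G₁.deleteEdges (E₁ S)) = 2
  · exact Or.inl (helem S hS hS' h2)
  obtain ⟨A, B, hA, hA', hB, hB', hAB, hsplit⟩ := (hE₁ S hS hS').exists_split hconn hc₁ hS hS' h2
  refine Or.inr ⟨A, B, ⟨hA, hA'⟩, ⟨hB, hB'⟩, ?_,
    (hE₂ S hS hS').cutWeight_le_add hc₂ (hE₂ A hA hA') (hE₂ B hB hB') hAB⟩
  rw [← mul_add]
  exact mul_le_mul_of_nonneg_left (hsplit _ _ (hE₁ A hA hA') (hE₁ B hB hB')) hk.le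

theorem elementary_cuts_suffice_for_cut_sparsifier_general
    {V W τ : Type} [Fintype τ]
    (G : SimpleGraph V) (H : SimpleGraph W) (cG : Sym2 V → ℝ) (cH : Sym2 W → ℝ)
    (hGconn : G.Connected) (hHconn : H.Connected)
    (hGpos : ∀ e ∈ G.edgeSet, 0 < cG e) (hHpos : ∀ e ∈ H.edgeSet, 0 < cH e)
    (tG : τ ↪ V) (tH : τ ↪ W)
    (EG : Set τ → Finset (Sym2 V)) (EH : Set τ → Finset (Sym2 W))
    (hEG : ∀ S : Set τ, S.Nonempty → S ≠ Set.univ →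
      IsMinCutset G cG (Set.range tG) (tG '' S) (EG S))
    (hEH : ∀ S : Set τ, S.Nonempty → S ≠ Set.univ →
      IsMinCutset H cH (Set.range tH) (tH '' S) (EH S))
    (q : ℝ) (hq : 1 ≤ q)
    -- the families of elementary terminal subsets coincide: T_e(G) = T_e(H)
    (hTe : ∀ S : Set τ, S.Nonempty → S ≠ Set.univ →
      (numComponents (G.deleteEdges ((EG S : Set (Sym2 V)))) = 2 ↔
       numComponents (H.deleteEdges ((EH S : Set (Sym2 W)))) = 2))
    -- every elementary minimum terminal cut is preserved up to factor q
    (happrox : ∀ S : Set τ, S.Nonempty → S ≠ Set.univ →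
      numComponents (G.deleteEdges ((EG S : Set (Sym2 V)))) = 2 →
      cutWeight cG (EG S) ≤ cutWeight cH (EH S) ∧
      cutWeight cH (EH S) ≤ q * cutWeight cG (EG S)) :
    ∀ S : Set τ, S.Nonempty → S ≠ Set.univ →
      cutWeight cG (EG S) ≤ cutWeight cH (EH S) ∧
      cutWeight cH (EH S) ≤ q * cutWeight cG (EG S) := by
  intro S hS hS'
  constructor
  · simpa only [one_mul] using
      cutWeight_le_mul_of_forall_elementary hHconn hHpos hEH (fun e he => (hGpos e he).le) hEG
        one_pos (fun S hS hS' h2 => by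
          simpa only [one_mul] using (happrox S hS hS' ((hTe S hS hS').2 h2)).1) S hS hS'
  · exact cutWeight_le_mul_of_forall_elementary hGconn hGpos hEG (fun e he => (hHpos e he).le)
      hEH (by linarith) (fun S hS hS' h2 => (happrox S hS hS' h2).2) S hS hS'

/-- if `G` and `H` have the same elementary terminal subsets and `H`
preserves all elementary minimum terminal cuts up to factor `q`, then `H` preserves
all minimum terminal cuts up to factor `q` (i.e. `H` is a quality-`q` cut sparsifier).

The common terminal set is modelled by a type `τ` embedded in both vertex sets;
`EG S`/`EH S` are the (unique) minimum cutsets separating `S` from its complement. -/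
theorem elementary_cuts_suffice_for_cut_sparsifier
    {V W τ : Type} [Fintype V] [Fintype W] [Fintype τ]
    (G : SimpleGraph V) (H : SimpleGraph W) (cG : Sym2 V → ℝ) (cH : Sym2 W → ℝ)
    (hGconn : G.Connected) (hHconn : H.Connected)
    (hGpos : ∀ e ∈ G.edgeSet, 0 < cG e) (hHpos : ∀ e ∈ H.edgeSet, 0 < cH e)
    (tG : τ ↪ V) (tH : τ ↪ W)
    (EG : Set τ → Finset (Sym2 V)) (EH : Set τ → Finset (Sym2 W))
    (hEG : ∀ S : Set τ, S.Nonempty → S ≠ Set.univ →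
      IsMinCutset G cG (Set.range tG) (tG '' S) (EG S))
    (hEH : ∀ S : Set τ, S.Nonempty → S ≠ Set.univ →
      IsMinCutset H cH (Set.range tH) (tH '' S) (EH S))
    (q : ℝ) (hq : 1 ≤ q)
    -- the families of elementary terminal subsets coincide: T_e(G) = T_e(H)
    (hTe : ∀ S : Set τ, S.Nonempty → S ≠ Set.univ →
      (numComponents (G.deleteEdges ((EG S : Set (Sym2 V)))) = 2 ↔
       numComponents (H.deleteEdges ((EH S : Set (Sym2 W)))) = 2))
    -- every elementary minimum terminal cut is preserved up to factor q
    (happrox : ∀ S : Set τ, S.Nonempty → S ≠ Set.univ →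
      numComponents (G.deleteEdges ((EG S : Set (Sym2 V)))) = 2 →
      cutWeight cG (EG S) ≤ cutWeight cH (EH S) ∧
      cutWeight cH (EH S) ≤ q * cutWeight cG (EG S)) :
    ∀ S : Set τ, S.Nonempty → S ≠ Set.univ →
      cutWeight cG (EG S) ≤ cutWeight cH (EH S) ∧
      cutWeight cH (EH S) ≤ q * cutWeight cG (EG S) :=
  elementary_cuts_suffice_for_cut_sparsifier_general G H cG cH hGconn hHconn hGpos hHpos tG tH EG EH
    hEG hEH q hq hTe happrox
end

section
/- Let H be a finite plane multigraph (possibly disconnected, with c connected components) in which every vertex has degree at least 2. Let m be the number of edges of H having at least one endpoint of degree ≥ 3. Then the number of faces of H is at most m + 1 + c. -/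
open scoped Classical

lemma sum_weight {V : Type} [Fintype V] (s : Sym2 V) :
    ∑ v, (if s = s(v, v) then 2 else if v ∈ s then 1 else 0) = 2 := by
  induction s using Sym2.ind with
  | _ a b =>
    by_cases hab : a = b
    · subst hab
      have : ∀ v : V, (if s(a, a) = s(v, v) then 2 else if v ∈ s(a, a) then 1 else 0)
          = if v = a then 2 else 0 := by
        intro v
        by_cases h : v = a
        · subst h; simp
        · rw [if_neg, if_neg, if_neg h]
          · simp only [Sym2.mem_iff, not_or]
            exact ⟨h, h⟩
          · intro h'
            rcases Sym2.eq_iff.mp h' with ⟨rfl, _⟩ | ⟨rfl, _⟩ <;> exact h rfl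
      rw [Finset.sum_congr rfl fun v _ => this v]
      simp
    · have : ∀ v : V, (if s(a, b) = s(v, v) then 2 else if v ∈ s(a, b) then 1 else 0)
          = if v ∈ ({a, b} : Finset V) then 1 else 0 := by
        intro v
        have h1 : ¬ s(a, b) = s(v, v) := by
          intro h'
          rcases Sym2.eq_iff.mp h' with ⟨rfl, rfl⟩ | ⟨rfl, rfl⟩ <;> exact hab rfl
        rw [if_neg h1]
        simp [Sym2.mem_iff, Finset.mem_insert]
      rw [Finset.sum_congr rfl fun v _ => this v, Finset.sum_ite_mem, Finset.univ_inter,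
        Finset.sum_const, Finset.card_insert_of_notMem (by simp [hab]), Finset.card_singleton]
      rfl

/-- let `H` be a finite plane multigraph (with `c` connected components)
of minimum degree `≥ 2`, and let `m` be the number of edges with at least one endpoint
of degree `≥ 3`. Then the number of faces of `H` is at most `m + 1 + c`.

The plane multigraph is abstracted by a vertex type `V`, an edge type `E` with an
endpoints map `ends : E → Sym2 V` (loops allowed), its degree function, and the number
of faces `F`, subject to Euler's formula `|V| − |E| + F = 1 + c`. -/
theorem faces_le_meeting_edges {V E : Type} [Fintype V] [Fintype E]
    (ends : E → Sym2 V) (deg : V → ℕ)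
    (hdeg_def : ∀ v, deg v =
      ∑ e, (if ends e = s(v, v) then 2 else if v ∈ ends e then 1 else 0))
    (F c : ℕ)
    (heuler : (Fintype.card V : ℤ) - (Fintype.card E : ℤ) + (F : ℤ) = 1 + (c : ℤ))
    (hdeg : ∀ v, 2 ≤ deg v) :
    F ≤ (Finset.univ.filter fun e => ∃ v ∈ ends e, 3 ≤ deg v).card + 1 + c := by
  classical
  set w : E → V → ℕ := fun e v => if ends e = s(v, v) then 2 else if v ∈ ends e then 1 else 0
    with hw
  set W : Finset V := Finset.univ.filter (fun v => deg v ≤ 2) with hW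
  set S : Finset E := Finset.univ.filter (fun e => ¬ ∃ v ∈ ends e, 3 ≤ deg v) with hS
  -- each edge in S has weight sum 2 over W
  have h1 : ∀ e ∈ S, ∑ v ∈ W, w e v = 2 := by
    intro e he
    have hmem : ∀ v, v ∈ ends e → v ∈ W := by
      intro v hv
      rw [hW, Finset.mem_filter]
      refine ⟨Finset.mem_univ _, ?_⟩
      rw [hS, Finset.mem_filter] at he
      by_contra h
      exact he.2 ⟨v, hv, by omega⟩
    have := sum_weight (V := V) (ends e)
    rw [← this]
    apply Finset.sum_subset (Finset.subset_univ W)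
    intro v _ hv
    rw [hw]
    simp only
    rw [if_neg, if_neg]
    · intro h; exact hv (hmem v h)
    · intro h; exact hv (hmem v (h ▸ Sym2.mem_mk_left v v))
  have h2 : ∑ e ∈ S, ∑ v ∈ W, w e v = 2 * S.card := by
    rw [Finset.sum_congr rfl h1, Finset.sum_const, smul_eq_mul, mul_comm]
  have h3 : ∑ v ∈ W, ∑ e ∈ S, w e v ≤ 2 * W.card := by
    calc ∑ v ∈ W, ∑ e ∈ S, w e v ≤ ∑ v ∈ W, deg v := by
          apply Finset.sum_le_sum
          intro v _
          rw [hdeg_def v]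
          exact Finset.sum_le_sum_of_subset (Finset.subset_univ S)
      _ ≤ ∑ v ∈ W, 2 := by
          apply Finset.sum_le_sum
          intro v hv
          rw [hW, Finset.mem_filter] at hv
          exact hv.2
      _ = 2 * W.card := by rw [Finset.sum_const, smul_eq_mul, mul_comm]
  have hS_le : S.card ≤ Fintype.card V := by
    have := h3
    rw [Finset.sum_comm, h2] at this
    have : S.card ≤ W.card := by omega
    exact this.trans (Finset.card_le_univ W)
  have hcard : (Finset.univ.filter fun e => ∃ v ∈ ends e, 3 ≤ deg v).card + S.card
      = Fintype.card E := by
    rw [hS]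
    exact Finset.card_filter_add_card_filter_not _
  omega
end

section
/- Let G be a finite connected plane multigraph with dual G*, and fix M ⊆ E(G). Then W ⊆ V(G) is a connected component of G∖M if and only if the set of dual faces {f*_v : v ∈ W} is (the set of faces merged into) a single face of the plane subgraph of G* induced by the dual edges M*. -/
/-- Two faces are directly merged by removing the edge set `N` from the dual graph if
some dual edge not in `N` has them as its two sides. -/
def regionStep {V' Φ : Type} (Gstar : SimpleGraph V') (side : Gstar.Dart → Φ)
    (N : Set (Sym2 V')) (f f' : Φ) : Prop :=
  ∃ d : Gstar.Dart, d.edge ∉ N ∧ side d = f ∧ side d.symm = f'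

/-- Two faces of the dual graph are merged into the same face of the plane subgraph
`Gstar[N]` retaining only the dual edges `N`. -/
def SameRegion {V' Φ : Type} (Gstar : SimpleGraph V') (side : Gstar.Dart → Φ)
    (N : Set (Sym2 V')) : Φ → Φ → Prop :=
  Relation.EqvGen (regionStep Gstar side N)

/-- the dual of a connected component: in a connected plane graph `G`
with planar dual `Gstar` (faces `Φ`, sides of darts given by `side`, vertex/face
correspondence `vFace`, edge correspondence `dualEdge`), for any `M ⊆ E(G)`:
`W` is a connected component of `G ∖ M` if and only if the set of dual faces
`{f*_v : v ∈ W}` is exactly one face of the plane subgraph `Gstar[M*]`, i.e. one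
equivalence class of faces of `Gstar` merged along dual edges not in `M*`. -/
theorem component_iff_dual_face {V V' Φ : Type} [Fintype V] [Fintype V']
    (G : SimpleGraph V) (Gstar : SimpleGraph V') (hconn : G.Connected)
    (vFace : V ≃ Φ) (side : Gstar.Dart → Φ) (dualEdge : Sym2 V → Sym2 V')
    (hdual_inj : ∀ e ∈ G.edgeSet, ∀ e' ∈ G.edgeSet, dualEdge e = dualEdge e' → e = e')
    (hcompat : ∀ u v : V, G.Adj u v → ∃ d : Gstar.Dart, d.edge = dualEdge s(u, v) ∧
      ((side d = vFace u ∧ side d.symm = vFace v) ∨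
       (side d = vFace v ∧ side d.symm = vFace u)))
    (hcompat' : ∀ d : Gstar.Dart, ∃ u v : V, G.Adj u v ∧ d.edge = dualEdge s(u, v) ∧
      ((side d = vFace u ∧ side d.symm = vFace v) ∨
       (side d = vFace v ∧ side d.symm = vFace u)))
    (M : Set (Sym2 V)) (hM : M ⊆ G.edgeSet) (W : Set V) :
    (∃ w : V, W = {v | (G.deleteEdges M).Reachable w v})
    ↔
    (∃ f : Φ, vFace '' W = {f' | SameRegion Gstar side (dualEdge '' M) f f'}) := by
  -- one step: adjacency in G ∖ M gives SameRegion of the corresponding faces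
  have step : ∀ u v : V, (G.deleteEdges M).Adj u v →
      SameRegion Gstar side (dualEdge '' M) (vFace u) (vFace v) := by
    intro u v h
    rw [SimpleGraph.deleteEdges_adj] at h
    obtain ⟨hadj, hnot⟩ := h
    obtain ⟨d, hd, hs⟩ := hcompat u v hadj
    have hdn : d.edge ∉ dualEdge '' M := by
      rintro ⟨e, heM, he⟩
      have : e = s(u, v) := hdual_inj e (hM heM) _ hadj (he.trans hd)
      exact hnot (this ▸ heM)
    rcases hs with ⟨h1, h2⟩ | ⟨h1, h2⟩
    · exact Relation.EqvGen.rel _ _ ⟨d, hdn, h1, h2⟩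
    · exact Relation.EqvGen.symm _ _ (Relation.EqvGen.rel _ _ ⟨d, hdn, h1, h2⟩)
  -- forward: reachability implies SameRegion
  have fwd : ∀ u v : V, (G.deleteEdges M).Reachable u v →
      SameRegion Gstar side (dualEdge '' M) (vFace u) (vFace v) := by
    intro u v h
    obtain ⟨p⟩ := h
    induction p with
    | nil => exact Relation.EqvGen.refl _
    | cons h p ih => exact Relation.EqvGen.trans _ _ _ (step _ _ h) ih
  -- backward: SameRegion implies reachability
  have bwd : ∀ f f' : Φ, SameRegion Gstar side (dualEdge '' M) f f' →
      (G.deleteEdges M).Reachable (vFace.symm f) (vFace.symm f') := by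
    intro f f' h
    induction h with
    | rel f f' h =>
        obtain ⟨d, hdn, h1, h2⟩ := h
        obtain ⟨u, v, hadj, hd, hs⟩ := hcompat' d
        have hnot : s(u, v) ∉ M := fun hm => hdn ⟨s(u, v), hm, hd.symm⟩
        have hadj' : (G.deleteEdges M).Adj u v :=
          SimpleGraph.deleteEdges_adj.mpr ⟨hadj, hnot⟩
        rcases hs with ⟨g1, g2⟩ | ⟨g1, g2⟩
        · rw [← h1, g1, ← h2, g2, Equiv.symm_apply_apply, Equiv.symm_apply_apply]
          exact hadj'.reachable
        · rw [← h1, g1, ← h2, g2, Equiv.symm_apply_apply, Equiv.symm_apply_apply]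
          exact hadj'.symm.reachable
    | refl f => exact SimpleGraph.Reachable.refl _
    | symm f f' _ ih => exact ih.symm
    | trans f f' f'' _ _ ih1 ih2 => exact ih1.trans ih2
  constructor
  · rintro ⟨w, rfl⟩
    refine ⟨vFace w, ?_⟩
    ext f'
    constructor
    · rintro ⟨v, hv, rfl⟩
      exact fwd w v hv
    · intro hf
      refine ⟨vFace.symm f', ?_, by simp⟩
      have := bwd _ _ hf
      rwa [Equiv.symm_apply_apply] at this
  · rintro ⟨f, hf⟩
    refine ⟨vFace.symm f, ?_⟩
    ext v
    constructor
    · intro hv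
      have : vFace v ∈ vFace '' W := ⟨v, hv, rfl⟩
      rw [hf] at this
      have := bwd _ _ this
      rwa [Equiv.symm_apply_apply] at this
    · intro hv
      have : SameRegion Gstar side (dualEdge '' M) f (vFace v) := by
        have := fwd _ _ hv
        rwa [Equiv.apply_symm_apply] at this
      have : vFace v ∈ vFace '' W := by rw [hf]; exact this
      obtain ⟨u, hu, he⟩ := this
      rwa [← vFace.injective he]
end
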